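/- Suppose the family {B_{m,n}} satisfies separated Weierstrass preparation in both kinds of variables. Then Weierstrass division in ρ_n holds: for all m ≥ 0, n ≥ 1, d ≥ 0, every f ∈ B_{m,n} regular in ρ_n of degree d, and every g ∈ B_{m,n}, there exist a unique q ∈ B_{m,n} and unique r_0,…,r_{d-1} ∈ B_{m,n-1} such that g = q·f + r_{d-1}ρ_n^{d-1} + ⋯ + r_1ρ_n + r_0. -/

import Mathlib

noncomputable section
open scoped Classical
open MvPowerSeries

namespace SCW

variable {B : Type*} [CommRing B]

/-- A variable of the two-kinds ambient: `Sum.inl i` is `ξ_{i+1}` and `Sum.inr j` is `ρ_{j+1}`.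
`varOK m n v` says that the variable `v` is one of `ξ_1,…,ξ_m,ρ_1,…,ρ_n`. -/
def varOK (m n : ℕ) : ℕ ⊕ ℕ → Prop := Sum.elim (· < m) (· < n)

/-- The action of a permutation of the variables on a separated power series. -/
def permute2 (e : Equiv.Perm (ℕ ⊕ ℕ)) (f : MvPowerSeries (ℕ ⊕ ℕ) B) :
    MvPowerSeries (ℕ ⊕ ℕ) B :=
  fun d => MvPowerSeries.coeff (Finsupp.equivMapDomain e d) f

/-- Coefficientwise reduction modulo the ideal `I`. -/
def red2 (I : Ideal B) : MvPowerSeries (ℕ ⊕ ℕ) B → MvPowerSeries (ℕ ⊕ ℕ) (B ⧸ I) :=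
  MvPowerSeries.map (Ideal.Quotient.mk I)

/-- The coefficient series `f̄_{μν}` of `(ξ'')^μ(ρ'')^ν` when `f` is written as a series in the
variables `ξ_i (i > m), ρ_j (j > n)` with coefficients series in `ξ_1,…,ξ_m,ρ_1,…,ρ_n`. -/
def slice2 (m n : ℕ) (μ : (ℕ ⊕ ℕ) →₀ ℕ) (f : MvPowerSeries (ℕ ⊕ ℕ) B) :
    MvPowerSeries (ℕ ⊕ ℕ) B :=
  fun d => if (∀ v ∈ d.support, varOK m n v) then MvPowerSeries.coeff (d + μ) f else 0

/-- The coefficient (a series in `ξ` only) of `ρ^μ` in `f`, viewing `f ∈ R[[ξ]][[ρ]]`. -/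
def sliceRho {R : Type*} [CommRing R] (μ : ℕ →₀ ℕ) (f : MvPowerSeries (ℕ ⊕ ℕ) R) :
    MvPowerSeries (ℕ ⊕ ℕ) R :=
  fun d => if (∀ j : ℕ, d (Sum.inr j) = 0)
    then MvPowerSeries.coeff (d + μ.mapDomain Sum.inr) f else 0

/-- `f` is (equal to) a polynomial in the `ξ`-variables only. -/
def IsPolyXi {R : Type*} [CommRing R] (f : MvPowerSeries (ℕ ⊕ ℕ) R) : Prop :=
  ∃ p : MvPolynomial (ℕ ⊕ ℕ) R, (∀ v ∈ p.vars, ∃ i : ℕ, v = Sum.inl i) ∧ f = ↑p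

/-- A family `{B_{m,n}}` of subalgebras
`B[ξ_1,…,ξ_m,ρ_1,…,ρ_n] ⊆ B_{m,n} ⊆ B_{m',n'} ⊆ B[[ξ_1,…,ξ_{m'},ρ_1,…,ρ_{n'}]]`, closed under
permutations of the `ξ`'s and of the `ρ`'s, satisfying condition (*) (coefficients of
`f ∈ B_{m',n'}` written as a series in `(ξ'',ρ'')` lie in `B_{m,n}`) and condition (**)
(`(B/I)[ξ,ρ] ⊆ B̃_{m,n} ⊆ (B/I)[ξ][[ρ]]`). -/
structure SepFamily (B : Type u) [CommRing B] (I : Ideal B) : Type u where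
  Bmn : ℕ → ℕ → Subalgebra B (MvPowerSeries (ℕ ⊕ ℕ) B)
  mono : ∀ {m n m' n' : ℕ}, m ≤ m' → n ≤ n' → Bmn m n ≤ Bmn m' n'
  varsBelow : ∀ m n, ∀ f ∈ Bmn m n, ∀ d : (ℕ ⊕ ℕ) →₀ ℕ,
    (∃ v ∈ d.support, ¬ varOK m n v) → MvPowerSeries.coeff d f = 0
  poly_mem : ∀ m n (p : MvPolynomial (ℕ ⊕ ℕ) B), (∀ v ∈ p.vars, varOK m n v) →
    (↑p : MvPowerSeries (ℕ ⊕ ℕ) B) ∈ Bmn m n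
  permXi : ∀ m n (e : Equiv.Perm ℕ), (∀ i, m ≤ i → e i = i) →
    ∀ f ∈ Bmn m n, permute2 (Equiv.sumCongr e (Equiv.refl ℕ)) f ∈ Bmn m n
  permRho : ∀ m n (e : Equiv.Perm ℕ), (∀ j, n ≤ j → e j = j) →
    ∀ f ∈ Bmn m n, permute2 (Equiv.sumCongr (Equiv.refl ℕ) e) f ∈ Bmn m n
  slice_mem : ∀ {m n m' n' : ℕ}, m ≤ m' → n ≤ n' → ∀ μ : (ℕ ⊕ ℕ) →₀ ℕ,
    (∀ v ∈ μ.support, ¬ varOK m n v) → ∀ f ∈ Bmn m' n', slice2 m n μ f ∈ Bmn m n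
  red_upper : ∀ m n, ∀ f ∈ Bmn m n, ∀ μ : ℕ →₀ ℕ, IsPolyXi (sliceRho μ (red2 I f))
  red_lower : ∀ m n (q : MvPolynomial (ℕ ⊕ ℕ) (B ⧸ I)), (∀ v ∈ q.vars, varOK m n v) →
    ∃ f ∈ Bmn m n, red2 I f = ↑q

/-- `f ∈ B_{m,n}` is regular in `ξ_m` of degree `d`: `f̃` mod `(ρ_1,…,ρ_n)` is a monic
polynomial in `ξ_m` of degree `d` (with lower coefficients in `(B/I)[ξ_1,…,ξ_{m-1}]`). -/
def SepRegXi (I : Ideal B) (m n d : ℕ) (f : MvPowerSeries (ℕ ⊕ ℕ) B) : Prop :=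
  ∃ c : Fin d → MvPolynomial (ℕ ⊕ ℕ) (B ⧸ I),
    (∀ i, ∀ v ∈ (c i).vars, ∃ i' : ℕ, i' < m - 1 ∧ v = Sum.inl i') ∧
    ∀ e : (ℕ ⊕ ℕ) →₀ ℕ, (∀ j : ℕ, j < n → e (Sum.inr j) = 0) →
      MvPowerSeries.coeff e (red2 I f) =
      MvPowerSeries.coeff e
        ↑((MvPolynomial.X (Sum.inl (m - 1)) : MvPolynomial (ℕ ⊕ ℕ) (B ⧸ I)) ^ d
          + ∑ i : Fin d, c i * (MvPolynomial.X (Sum.inl (m - 1))) ^ (i : ℕ))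

/-- `f ∈ B_{m,n}` is regular in `ρ_n` of degree `d`:
`f̃ ≡ ρ_n^d mod (ρ_1,…,ρ_{n-1},ρ_n^{d+1})` in `(B/I)[ξ][[ρ]]`. -/
def SepRegRho (I : Ideal B) (n d : ℕ) (f : MvPowerSeries (ℕ ⊕ ℕ) B) : Prop :=
  ∀ e : (ℕ ⊕ ℕ) →₀ ℕ, (∀ j : ℕ, j < n - 1 → e (Sum.inr j) = 0) →
    (∀ j : ℕ, n ≤ j → e (Sum.inr j) = 0) → e (Sum.inr (n - 1)) ≤ d →
    MvPowerSeries.coeff e (red2 I f) =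
      if e = Finsupp.single (Sum.inr (n - 1)) d then 1 else 0

/-- Separated Weierstrass preparation in the variables of both kinds for `{B_{m,n}}`. -/
def SepHasWP {B : Type u} [CommRing B] {I : Ideal B} (ℬ : SepFamily B I) : Prop :=
  (∀ m n d : ℕ, 1 ≤ m → ∀ f ∈ ℬ.Bmn m n, SepRegXi I m n d f →
    ∃! ur : MvPowerSeries (ℕ ⊕ ℕ) B × (Fin d → MvPowerSeries (ℕ ⊕ ℕ) B),
      ur.1 ∈ ℬ.Bmn m n ∧ (∃ v ∈ ℬ.Bmn m n, ur.1 * v = 1) ∧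
      (∀ i, ur.2 i ∈ ℬ.Bmn (m - 1) n) ∧
      f = ur.1 * ((MvPowerSeries.X (Sum.inl (m - 1))) ^ d
        + ∑ i : Fin d, ur.2 i * (MvPowerSeries.X (Sum.inl (m - 1))) ^ (i : ℕ))) ∧
  (∀ m n d : ℕ, 1 ≤ n → ∀ f ∈ ℬ.Bmn m n, SepRegRho I n d f →
    ∃! ur : MvPowerSeries (ℕ ⊕ ℕ) B × (Fin d → MvPowerSeries (ℕ ⊕ ℕ) B),
      ur.1 ∈ ℬ.Bmn m n ∧ (∃ v ∈ ℬ.Bmn m n, ur.1 * v = 1) ∧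
      (∀ i, ur.2 i ∈ ℬ.Bmn m (n - 1)) ∧
      f = ur.1 * ((MvPowerSeries.X (Sum.inr (n - 1))) ^ d
        + ∑ i : Fin d, ur.2 i * (MvPowerSeries.X (Sum.inr (n - 1))) ^ (i : ℕ)))

end SCW

/-!
Write `ρ = ρ_n`, let `t = ρ_{n+1}` be a fresh variable and `σ` the permutation swapping them.
Preparation of `f` gives `f = u · P` with `P` a Weierstrass polynomial in `ρ`, and `P` is again
regular in `ρ` of degree `d`.

Existence: `σ(P + t g)` is regular in `t` of degree `d`, so preparation in `t` and swapping back
write `P + t g = U · (ρ^d + Σ A_i ρ^i)` with `A_i` free of `ρ`. The coefficient of `t⁰` is a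
second preparation of `P`, so by uniqueness `U ≡ 1` and `A_i ≡ p_i` modulo `t`; the coefficient
of `t¹` then reads `g = U₁ P + Σ A_{i,1} ρ^i`.

Uniqueness: if `h P = -Σ δ_i ρ^i`, then `E = 1 - ρ σ(h)` is a unit and
`E · σ(P) = t^d + Σ (p_i + ρ δ_i) t^i` is regular in `t`. Comparing the preparations `(E, p)` and
`(1, p + ρ δ)` of this series gives `E = 1` and `ρ δ = 0`, hence `h = 0` and `δ = 0`.
-/

namespace SCW

open Finsupp MvPowerSeries

variable {R : Type*} [CommRing R]

section PowerSeries

variable {σ : Type*}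

lemma coeff_X_mul_of_eq_zero {s : σ} {e : σ →₀ ℕ} (he : e s = 0) (φ : MvPowerSeries σ R) :
    coeff e (X s * φ) = 0 := by
  rw [show (X s : MvPowerSeries σ R) = monomial (single s 1) 1 from rfl, coeff_monomial_mul,
    if_neg]
  simp [single_le_iff, he]

lemma coeff_mul_X_pow_of_ne {s : σ} {φ : MvPowerSeries σ R}
    (hφ : ∀ e : σ →₀ ℕ, e s ≠ 0 → coeff e φ = 0) {k : ℕ} {e : σ →₀ ℕ} (he : e s ≠ k) :
    coeff e (φ * X s ^ k) = 0 := by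
  rw [X_pow_eq, coeff_mul_monomial]
  split_ifs with hle
  · rw [hφ _ (by rw [single_le_iff] at hle; simp; omega), zero_mul]
  · rfl

lemma coeff_mul_eq_zero_of_forall_le {φ ψ : MvPowerSeries σ R} {e : σ →₀ ℕ}
    (hψ : ∀ q ≤ e, coeff q ψ = 0) : coeff e (φ * ψ) = 0 := by
  rw [coeff_mul]
  refine Finset.sum_eq_zero fun p hp => ?_
  rw [Finset.HasAntidiagonal.mem_antidiagonal] at hp
  rw [hψ p.2 (hp ▸ le_add_self), mul_zero]

lemma eq_zero_of_X_mul_eq_zero {s : σ} {φ : MvPowerSeries σ R} (h : X s * φ = 0) : φ = 0 := by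
  ext e
  have := congrArg (coeff (e + single s 1)) h
  rwa [show (X s : MvPowerSeries σ R) = monomial (single s 1) 1 from rfl, coeff_monomial_mul,
    if_pos le_add_self, add_tsub_cancel_right, one_mul] at this

lemma pderiv_eq_zero_of_coeff_eq_zero {s : σ} {φ : MvPowerSeries σ R}
    (hφ : ∀ e : σ →₀ ℕ, e s ≠ 0 → coeff e φ = 0) : pderiv R s φ = 0 := by
  ext e
  rw [coeff_pderiv, hφ _ (by simp), zero_mul, map_zero]

lemma pderiv_X_pow_of_ne {s t : σ} (h : s ≠ t) (k : ℕ) :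
    pderiv R t (X s ^ k : MvPowerSeries σ R) = 0 := by
  rw [pderiv_pow, pderiv_X_of_ne h, mul_zero]

lemma coeff_rename_equiv (e : Equiv.Perm σ) (f : MvPowerSeries σ R) (x : σ →₀ ℕ) :
    coeff x (rename e f) = coeff (equivMapDomain e.symm x) f := by
  have h := coeff_embDomain_rename (R := R) e.toEmbedding f (equivMapDomain e.symm x)
  have hx : embDomain e.toEmbedding (equivMapDomain e.symm x) = x := by
    ext v
    simp [embDomain_eq_mapDomain, ← equivMapDomain_eq_mapDomain]
  rw [hx] at h
  exact h

lemma permute2_eq_rename (e : Equiv.Perm (ℕ ⊕ ℕ)) (f : MvPowerSeries (ℕ ⊕ ℕ) R) :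
    permute2 e f = rename e.symm f := by
  ext x
  rw [coeff_rename_equiv, Equiv.symm_symm]
  rfl

variable [DecidableEq σ]

lemma rename_swap_rename_swap (a b : σ) (f : MvPowerSeries σ R) :
    rename (Equiv.swap a b) (rename (Equiv.swap a b) f) = f := by
  rw [rename_rename]
  convert rename_id_apply f
  funext v
  simp

lemma rename_swap_eq_self {a b : σ} {f : MvPowerSeries σ R}
    (hf : ∀ e : σ →₀ ℕ, e a ≠ 0 ∨ e b ≠ 0 → coeff e f = 0) :
    rename (Equiv.swap a b) f = f := by
  ext x
  rw [coeff_rename_equiv, Equiv.symm_swap]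
  by_cases hx : x a = 0 ∧ x b = 0
  · rw [show equivMapDomain (Equiv.swap a b) x = x from ?_]
    ext v
    rw [equivMapDomain_apply, Equiv.symm_swap]
    rcases eq_or_ne v a with rfl | hva
    · simp [hx.1, hx.2]
    rcases eq_or_ne v b with rfl | hvb
    · simp [hx.1, hx.2]
    rw [Equiv.swap_apply_of_ne_of_ne hva hvb]
  · rw [hf x (not_and_or.mp hx), hf]
    simpa [equivMapDomain_apply, or_comm] using not_and_or.mp hx

end PowerSeries

section WeierstrassPoly

variable {σ : Type*} {d : ℕ}

def sumMulXPow (c : σ) (r : Fin d → MvPowerSeries σ R) : MvPowerSeries σ R :=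
  ∑ i : Fin d, r i * X c ^ (i : ℕ)

def weierstrassPoly (c : σ) (r : Fin d → MvPowerSeries σ R) : MvPowerSeries σ R :=
  X c ^ d + sumMulXPow c r

variable {S F : Type*} [CommRing S] [FunLike F (MvPowerSeries σ R) (MvPowerSeries σ S)]
  [RingHomClass F (MvPowerSeries σ R) (MvPowerSeries σ S)]

lemma map_sumMulXPow (φ : F) {c c' : σ} (hc : φ (X c) = X c') (r : Fin d → MvPowerSeries σ R) :
    φ (sumMulXPow c r) = sumMulXPow c' fun i => φ (r i) := by
  simp only [sumMulXPow, map_sum, map_mul, map_pow, hc]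

lemma map_weierstrassPoly (φ : F) {c c' : σ} (hc : φ (X c) = X c')
    (r : Fin d → MvPowerSeries σ R) :
    φ (weierstrassPoly c r) = weierstrassPoly c' fun i => φ (r i) := by
  rw [weierstrassPoly, map_add, map_pow, hc, map_sumMulXPow φ hc, weierstrassPoly]

lemma sumMulXPow_sub (c : σ) (r r' : Fin d → MvPowerSeries σ R) :
    sumMulXPow c (r - r') = sumMulXPow c r - sumMulXPow c r' := by
  simp only [sumMulXPow, Pi.sub_apply, sub_mul, Finset.sum_sub_distrib]

lemma weierstrassPoly_add_mul (c : σ) (r r' : Fin d → MvPowerSeries σ R)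
    (a : MvPowerSeries σ R) :
    weierstrassPoly c (fun i => r i + a * r' i) = weierstrassPoly c r + a * sumMulXPow c r' := by
  simp only [weierstrassPoly, sumMulXPow, add_mul, Finset.sum_add_distrib, Finset.mul_sum,
    mul_assoc, add_assoc]

lemma pderiv_weierstrassPoly {s t : σ} (h : s ≠ t) (r : Fin d → MvPowerSeries σ R) :
    pderiv R t (weierstrassPoly s r) = sumMulXPow s fun i => pderiv R t (r i) := by
  simp only [weierstrassPoly, sumMulXPow, map_add, map_sum, Derivation.leibniz,
    pderiv_X_pow_of_ne h, smul_eq_mul, mul_zero, zero_add, mul_comm]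

lemma one_sub_X_mul_mul_rename_swap [DecidableEq σ] {a b : σ}
    {p δ : Fin d → MvPowerSeries σ R} (hp : ∀ i, rename (Equiv.swap a b) (p i) = p i)
    (hδ : ∀ i, rename (Equiv.swap a b) (δ i) = δ i) {h : MvPowerSeries σ R}
    (H : h * weierstrassPoly a p + sumMulXPow a δ = 0) :
    (1 - X a * rename (Equiv.swap a b) h) * rename (Equiv.swap a b) (weierstrassPoly a p) =
      weierstrassPoly b fun i => p i + X a * δ i := by
  have hσH := congrArg (rename (Equiv.swap a b)) (eq_neg_of_add_eq_zero_left H)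
  rw [map_mul, map_neg, map_sumMulXPow _ (rename_X _ _), Equiv.swap_apply_left] at hσH
  rw [weierstrassPoly_add_mul, map_weierstrassPoly _ (rename_X _ _), Equiv.swap_apply_left] at *
  simp only [hp, hδ] at hσH ⊢
  linear_combination (- X a) * hσH

end WeierstrassPoly

section Slices

lemma coeff_slice2 (m n : ℕ) (μ : (ℕ ⊕ ℕ) →₀ ℕ) (f : MvPowerSeries (ℕ ⊕ ℕ) R)
    (e : (ℕ ⊕ ℕ) →₀ ℕ) :
    coeff e (slice2 m n μ f) =
      if ∀ v ∈ e.support, varOK m n v then coeff (e + μ) f else 0 := rfl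

lemma slice2_zero_mul (m n : ℕ) (a b : MvPowerSeries (ℕ ⊕ ℕ) R) :
    slice2 m n 0 (a * b) = slice2 m n 0 a * slice2 m n 0 b := by
  ext e
  simp only [coeff_slice2, add_zero, coeff_mul]
  split_ifs with he
  · refine Finset.sum_congr rfl fun p hp => ?_
    rw [Finset.HasAntidiagonal.mem_antidiagonal] at hp
    have h1 : p.1 ≤ e := hp ▸ le_self_add
    have h2 : p.2 ≤ e := hp ▸ le_add_self
    rw [if_pos fun v hv => he v (support_mono h1 hv), if_pos fun v hv => he v (support_mono h2 hv)]
  · push Not at he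
    obtain ⟨v, hv, hbad⟩ := he
    refine (Finset.sum_eq_zero fun p hp => ?_).symm
    rw [Finset.HasAntidiagonal.mem_antidiagonal] at hp
    rcases Finset.mem_union.mp (support_add (hp ▸ hv)) with h | h
    · exact mul_eq_zero_of_left (if_neg fun h' => hbad (h' v h)) _
    · exact mul_eq_zero_of_right _ (if_neg fun h' => hbad (h' v h))

lemma slice2_zero_one (m n : ℕ) : slice2 m n 0 (1 : MvPowerSeries (ℕ ⊕ ℕ) R) = 1 := by
  ext e
  simp only [coeff_slice2, add_zero, coeff_one]
  split_ifs <;> simp_all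

/-- Setting every variable other than `ξ_1,…,ξ_m,ρ_1,…,ρ_n` to zero. -/
def restrictVars (m n : ℕ) : MvPowerSeries (ℕ ⊕ ℕ) R →+* MvPowerSeries (ℕ ⊕ ℕ) R where
  toFun := slice2 m n 0
  map_one' := slice2_zero_one m n
  map_mul' := slice2_zero_mul m n
  map_zero' := by ext e; simp [coeff_slice2]
  map_add' a b := by ext e; simp only [coeff_slice2, map_add]; split_ifs <;> simp

lemma restrictVars_apply (m n : ℕ) (f : MvPowerSeries (ℕ ⊕ ℕ) R) :
    restrictVars m n f = slice2 m n 0 f := rfl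

lemma restrictVars_eq_self {m n : ℕ} {f : MvPowerSeries (ℕ ⊕ ℕ) R}
    (hf : ∀ e : (ℕ ⊕ ℕ) →₀ ℕ, (∃ v ∈ e.support, ¬ varOK m n v) → coeff e f = 0) :
    restrictVars m n f = f := by
  ext e
  rw [restrictVars_apply, coeff_slice2, add_zero]
  split_ifs with he
  · rfl
  · push Not at he
    exact (hf e he).symm

lemma restrictVars_X_of_varOK {m n : ℕ} {v : ℕ ⊕ ℕ} (hv : varOK m n v) :
    restrictVars m n (X v : MvPowerSeries (ℕ ⊕ ℕ) R) = X v := by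
  refine restrictVars_eq_self fun e ⟨w, hw, hbad⟩ => ?_
  rw [coeff_X, if_neg]
  rintro rfl
  rw [Finset.mem_singleton.mp (support_single_subset hw)] at hbad
  exact hbad hv

lemma restrictVars_X_of_not_varOK {m n : ℕ} {v : ℕ ⊕ ℕ} (hv : ¬ varOK m n v) :
    restrictVars m n (X v : MvPowerSeries (ℕ ⊕ ℕ) R) = 0 := by
  ext e
  rw [restrictVars_apply, coeff_slice2, add_zero, coeff_X, map_zero]
  split_ifs with he h <;> simp_all

lemma slice2_single_one {m n : ℕ} {c : ℕ ⊕ ℕ} (hc : ¬ varOK m n c)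
    (f : MvPowerSeries (ℕ ⊕ ℕ) R) :
    slice2 m n (single c 1) f = restrictVars m n (pderiv R c f) := by
  ext e
  rw [restrictVars_apply, coeff_slice2, coeff_slice2, add_zero, coeff_pderiv]
  split_ifs with he
  · have : e c = 0 := by_contra fun h => hc (he c (mem_support_iff.mpr h))
    simp [this]
  · rfl

lemma slice2_succ_eq {m n : ℕ} (μ : (ℕ ⊕ ℕ) →₀ ℕ) {f : MvPowerSeries (ℕ ⊕ ℕ) R}
    (hf : ∀ e : (ℕ ⊕ ℕ) →₀ ℕ, e (Sum.inr n) ≠ 0 → coeff e f = 0) :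
    slice2 m (n + 1) μ f = slice2 m n μ f := by
  ext e
  rw [coeff_slice2, coeff_slice2]
  by_cases he : ∀ v ∈ e.support, varOK m n v
  · rw [if_pos he, if_pos fun v hv => ?_]
    rcases v with i | j
    · exact he _ hv
    · exact Nat.lt_succ_of_lt (he _ hv)
  · rw [if_neg he]
    split_ifs with he'
    · push Not at he
      obtain ⟨v, hv, hbad⟩ := he
      have hvn : v = Sum.inr n := by
        rcases v with i | j
        · exact absurd (he' _ hv) hbad
        · have : j < n + 1 := he' _ hv
          have : ¬ j < n := hbad
          congr 1
          omega
      subst hvn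
      have := mem_support_iff.mp hv
      exact hf _ (by rw [Finsupp.add_apply]; omega)
    · rfl

/-- The coefficients of `t⁰` and `t¹` of both sides, computed as `restrictVars` of the series
and of its derivative in `t`. -/
lemma eq_of_add_X_mul_eq {m n : ℕ} {t ρ : ℕ ⊕ ℕ} (ht : ¬ varOK m n t) (hρ : varOK m n ρ)
    {P g U : MvPowerSeries (ℕ ⊕ ℕ) R} {d : ℕ} {a : Fin d → MvPowerSeries (ℕ ⊕ ℕ) R}
    (hP : ∀ e : (ℕ ⊕ ℕ) →₀ ℕ, (∃ v ∈ e.support, ¬ varOK m n v) → coeff e P = 0)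
    (hg : ∀ e : (ℕ ⊕ ℕ) →₀ ℕ, (∃ v ∈ e.support, ¬ varOK m n v) → coeff e g = 0)
    (h : P + X t * g = U * weierstrassPoly ρ a) :
    P = restrictVars m n U * weierstrassPoly ρ (fun i => restrictVars m n (a i)) ∧
    g = restrictVars m n (pderiv R t U) * weierstrassPoly ρ (fun i => restrictVars m n (a i))
        + restrictVars m n U * sumMulXPow ρ fun i => restrictVars m n (pderiv R t (a i)) := by
  have hρt : ρ ≠ t := fun h => ht (h ▸ hρ)
  have hsρ := restrictVars_X_of_varOK (R := R) hρ
  have hPt : pderiv R t P = 0 :=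
    pderiv_eq_zero_of_coeff_eq_zero fun e he => hP e ⟨t, mem_support_iff.mpr he, ht⟩
  constructor
  · simpa only [map_add, map_mul, restrictVars_X_of_not_varOK ht, zero_mul, add_zero,
      restrictVars_eq_self hP, map_weierstrassPoly _ hsρ] using congrArg (restrictVars m n) h
  · have h' := congrArg (fun x => restrictVars m n (pderiv R t x)) h
    simp only [map_add, Derivation.leibniz, hPt, pderiv_X_self, pderiv_weierstrassPoly hρt,
      smul_eq_mul, map_mul, restrictVars_X_of_not_varOK ht, restrictVars_eq_self hg,
      map_weierstrassPoly _ hsρ, map_sumMulXPow _ hsρ, mul_one, zero_mul, zero_add] at h'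
    rw [h']
    ring

end Slices

section Family

variable {B : Type u} [CommRing B] {I : Ideal B} (ℬ : SepFamily B I)

namespace SepFamily

lemma coeff_eq_zero_of_mem {m n : ℕ} {f : MvPowerSeries (ℕ ⊕ ℕ) B} (hf : f ∈ ℬ.Bmn m n)
    {j : ℕ} (hj : n ≤ j) {e : (ℕ ⊕ ℕ) →₀ ℕ} (he : e (Sum.inr j) ≠ 0) : coeff e f = 0 :=
  ℬ.varsBelow m n f hf e ⟨Sum.inr j, mem_support_iff.mpr he, by simp [varOK]; omega⟩

lemma X_inr_mem {m n j : ℕ} (hj : j < n) :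
    (X (Sum.inr j) : MvPowerSeries (ℕ ⊕ ℕ) B) ∈ ℬ.Bmn m n := by
  have h := ℬ.poly_mem m n (MvPolynomial.X (Sum.inr j)) fun v hv => by
    obtain ⟨e, he, hv⟩ := (MvPolynomial.mem_vars_iff_mem_support v).mp hv
    rw [Finset.mem_singleton.mp (MvPolynomial.support_monomial_subset he)] at hv
    rw [Finset.mem_singleton.mp (support_single_subset hv)]
    exact hj
  rwa [MvPolynomial.coe_X] at h

lemma weierstrassPoly_mem {m N d : ℕ} {p : Fin d → MvPowerSeries (ℕ ⊕ ℕ) B}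
    (hp : ∀ i, p i ∈ ℬ.Bmn m N) : weierstrassPoly (Sum.inr N) p ∈ ℬ.Bmn m (N + 1) :=
  add_mem (pow_mem (ℬ.X_inr_mem (by omega)) d) (sum_mem fun i _ =>
    mul_mem (ℬ.mono le_rfl (by omega) (hp i)) (pow_mem (ℬ.X_inr_mem (by omega)) _))

lemma rename_swap_mem {m n j k : ℕ} (hj : j < n) (hk : k < n) {f : MvPowerSeries (ℕ ⊕ ℕ) B}
    (hf : f ∈ ℬ.Bmn m n) : rename (Equiv.swap (Sum.inr j) (Sum.inr k)) f ∈ ℬ.Bmn m n := by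
  have h := ℬ.permRho m n (Equiv.swap j k)
    (fun i hi => Equiv.swap_apply_of_ne_of_ne (by omega) (by omega)) f hf
  rwa [permute2_eq_rename, Equiv.sumCongr_symm, Equiv.refl_symm, Equiv.symm_swap,
    show (Equiv.refl ℕ).sumCongr (Equiv.swap j k) = Equiv.swap (Sum.inr j) (Sum.inr k) from
      Equiv.Perm.sumCongr_refl_swap j k] at h

lemma rename_swap_eq_self_of_mem {m n j k : ℕ} (hj : n ≤ j) (hk : n ≤ k)
    {f : MvPowerSeries (ℕ ⊕ ℕ) B} (hf : f ∈ ℬ.Bmn m n) :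
    rename (Equiv.swap (Sum.inr j) (Sum.inr k)) f = f :=
  rename_swap_eq_self fun _ he => he.elim (ℬ.coeff_eq_zero_of_mem hf hj)
    (ℬ.coeff_eq_zero_of_mem hf hk)

lemma restrictVars_mem {m n m' n' : ℕ} (hm : m ≤ m') (hn : n ≤ n')
    {f : MvPowerSeries (ℕ ⊕ ℕ) B} (hf : f ∈ ℬ.Bmn m' n') : restrictVars m n f ∈ ℬ.Bmn m n :=
  ℬ.slice_mem hm hn 0 (by simp) f hf

lemma slice2_succ_mem {m n m' n' : ℕ} (hm : m ≤ m') (hn : n + 1 ≤ n') {μ : (ℕ ⊕ ℕ) →₀ ℕ}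
    (hμ : ∀ v ∈ μ.support, ¬ varOK m (n + 1) v) {f : MvPowerSeries (ℕ ⊕ ℕ) B}
    (hf : f ∈ ℬ.Bmn m' n') (hfn : ∀ e : (ℕ ⊕ ℕ) →₀ ℕ, e (Sum.inr n) ≠ 0 → coeff e f = 0) :
    slice2 m (n + 1) μ f ∈ ℬ.Bmn m n := by
  rw [slice2_succ_eq μ hfn]
  refine ℬ.slice_mem hm (by omega) μ (fun v hv hok => hμ v hv ?_) f hf
  rcases v with i | j
  · exact hok
  · exact Nat.lt_succ_of_lt hok

end SepFamily

end Family

section Regularity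

variable {B : Type u} [CommRing B] {I : Ideal B}

lemma sepRegRho_one (n : ℕ) : SepRegRho I n 0 (1 : MvPowerSeries (ℕ ⊕ ℕ) B) := by
  intro e _ _ _
  simp [red2, coeff_one]

lemma SepRegRho.add_X_mul {n d : ℕ} {φ : MvPowerSeries (ℕ ⊕ ℕ) B} (hφ : SepRegRho I n d φ)
    {j : ℕ} (hj : j < n - 1) (ψ : MvPowerSeries (ℕ ⊕ ℕ) B) :
    SepRegRho I n d (φ + X (Sum.inr j) * ψ) := by
  intro e h1 h2 h3
  rw [red2, map_add, map_mul, map_X, map_add, coeff_X_mul_of_eq_zero (h1 j hj), add_zero]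
  exact hφ e h1 h2 h3

lemma SepRegRho.rename_swap {N d : ℕ} {P : MvPowerSeries (ℕ ⊕ ℕ) B}
    (hP : SepRegRho I (N + 1) d P) :
    SepRegRho I (N + 2) d (rename (Equiv.swap (Sum.inr N) (Sum.inr (N + 1))) P) := by
  simp only [SepRegRho, Nat.add_sub_cancel, Nat.add_succ_sub_one] at hP ⊢
  intro e h1 h2 h3
  set σ : Equiv.Perm (ℕ ⊕ ℕ) := Equiv.swap (Sum.inr N) (Sum.inr (N + 1)) with hσ
  have hσe : ∀ j, equivMapDomain σ e (Sum.inr j) = e (σ (Sum.inr j)) := fun j => by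
    rw [equivMapDomain_apply, hσ, Equiv.symm_swap]
  have hσ_eq : ∀ x : (ℕ ⊕ ℕ) →₀ ℕ,
      equivMapDomain σ x = single (Sum.inr N) d ↔ x = single (Sum.inr (N + 1)) d := fun x => by
    rw [← equivCongrLeft_apply, ← Equiv.eq_symm_apply, equivCongrLeft_symm,
      equivCongrLeft_apply, equivMapDomain_single, hσ, Equiv.symm_swap, Equiv.swap_apply_left]
  rw [red2, ← rename_map, coeff_rename_equiv, hσ, Equiv.symm_swap, ← hσ]
  refine (hP _ (fun j hj => ?_) (fun j hj => ?_) ?_).trans (if_congr (hσ_eq e) rfl rfl)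
  · rw [hσe, hσ, Equiv.swap_apply_of_ne_of_ne (by simp; omega) (by simp; omega)]
    exact h1 j (by omega)
  · rw [hσe]
    rcases hj.eq_or_lt with rfl | hj
    · rw [hσ, Equiv.swap_apply_right]
      exact h1 N (by omega)
    · rw [hσ, Equiv.swap_apply_of_ne_of_ne (by simp; omega) (by simp; omega)]
      exact h2 j (by omega)
  · rw [hσe, hσ, Equiv.swap_apply_left]
    exact h3

/-- Below degree `d` in `ρ_N` the coefficients of `P = v f` are those of `v f̃ ≡ v ρ_N^d`, hence
zero; in degree `d` they are those of `ρ_N^d`, since the `p_i` do not involve `ρ_N`. -/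
lemma SepRegRho.of_eq_mul {N d : ℕ} {f v : MvPowerSeries (ℕ ⊕ ℕ) B}
    {p : Fin d → MvPowerSeries (ℕ ⊕ ℕ) B} (hf : SepRegRho I (N + 1) d f)
    (hp : ∀ i e, e (Sum.inr N) ≠ 0 → coeff e (p i) = 0)
    (hP : weierstrassPoly (Sum.inr N) p = v * f) :
    SepRegRho I (N + 1) d (weierstrassPoly (Sum.inr N) p) := by
  simp only [SepRegRho, Nat.add_sub_cancel] at hf ⊢
  intro e h1 h2 h3
  rcases h3.lt_or_eq with hlt | heq
  · rw [hP, if_neg (by rintro rfl; simp at hlt), red2, map_mul]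
    refine coeff_mul_eq_zero_of_forall_le fun q hq => ?_
    have hq' : ∀ w, q w ≤ e w := fun w => hq w
    rw [← red2, hf q (fun j hj => by have := hq' (Sum.inr j); have := h1 j hj; omega)
      (fun j hj => by have := hq' (Sum.inr j); have := h2 j hj; omega)
      (by have := hq' (Sum.inr N); simp; omega), if_neg]
    rintro rfl
    have := hq' (Sum.inr N)
    simp at this
    omega
  · rw [red2, weierstrassPoly, map_add, map_pow, map_X, map_add, coeff_X_pow,
      map_sumMulXPow _ (map_X _ _), sumMulXPow, map_sum, Finset.sum_eq_zero, add_zero]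
    intro i _
    refine coeff_mul_X_pow_of_ne (fun e he => ?_) (by simp; omega)
    rw [coeff_map, hp i e he, map_zero]

end Regularity

section Preparation

variable {B : Type u} [CommRing B] {I : Ideal B} {ℬ : SepFamily B I}

variable (ℬ) in
def IsRhoPreparation (m n : ℕ) {d : ℕ} (f u : MvPowerSeries (ℕ ⊕ ℕ) B)
    (r : Fin d → MvPowerSeries (ℕ ⊕ ℕ) B) : Prop :=
  u ∈ ℬ.Bmn m n ∧ (∃ v ∈ ℬ.Bmn m n, u * v = 1) ∧ (∀ i, r i ∈ ℬ.Bmn m (n - 1)) ∧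
    f = u * weierstrassPoly (Sum.inr (n - 1)) r

namespace SepHasWP

lemma exists_isRhoPreparation (hWP : SepHasWP ℬ) {m n d : ℕ} (hn : 1 ≤ n)
    {f : MvPowerSeries (ℕ ⊕ ℕ) B} (hf : f ∈ ℬ.Bmn m n) (hreg : SepRegRho I n d f) :
    ∃ u r, IsRhoPreparation ℬ m n (d := d) f u r :=
  let ⟨⟨u, r⟩, h, _⟩ := hWP.2 m n d hn f hf hreg
  ⟨u, r, h⟩

lemma isRhoPreparation_unique (hWP : SepHasWP ℬ) {m n d : ℕ} (hn : 1 ≤ n)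
    {f : MvPowerSeries (ℕ ⊕ ℕ) B} (hf : f ∈ ℬ.Bmn m n) (hreg : SepRegRho I n d f)
    {u₁ u₂ : MvPowerSeries (ℕ ⊕ ℕ) B} {r₁ r₂ : Fin d → MvPowerSeries (ℕ ⊕ ℕ) B}
    (h₁ : IsRhoPreparation ℬ m n f u₁ r₁) (h₂ : IsRhoPreparation ℬ m n f u₂ r₂) :
    u₁ = u₂ ∧ r₁ = r₂ :=
  Prod.mk.inj ((hWP.2 m n d hn f hf hreg).unique (y₁ := (u₁, r₁)) (y₂ := (u₂, r₂)) h₁ h₂)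

lemma exists_mul_eq_one (hWP : SepHasWP ℬ) {m n : ℕ} (hn : 1 ≤ n)
    {E : MvPowerSeries (ℕ ⊕ ℕ) B} (hE : E ∈ ℬ.Bmn m n) (hreg : SepRegRho I n 0 E) :
    ∃ w ∈ ℬ.Bmn m n, E * w = 1 := by
  obtain ⟨u, r, -, ⟨w, hw, huw⟩, -, hEu⟩ := hWP.exists_isRhoPreparation hn hE hreg
  refine ⟨w, hw, ?_⟩
  simpa [hEu, weierstrassPoly, sumMulXPow] using huw

theorem exists_add_X_mul_eq_mul (hWP : SepHasWP ℬ) {m N d : ℕ}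
    {p : Fin d → MvPowerSeries (ℕ ⊕ ℕ) B} (hp : ∀ i, p i ∈ ℬ.Bmn m N)
    (hreg : SepRegRho I (N + 1) d (weierstrassPoly (Sum.inr N) p))
    {g : MvPowerSeries (ℕ ⊕ ℕ) B} (hg : g ∈ ℬ.Bmn m (N + 1)) :
    ∃ U ∈ ℬ.Bmn m (N + 2), (∃ V ∈ ℬ.Bmn m (N + 2), U * V = 1) ∧
      ∃ A : Fin d → MvPowerSeries (ℕ ⊕ ℕ) B, (∀ i, A i ∈ ℬ.Bmn m (N + 2)) ∧
        (∀ i, ∀ e : (ℕ ⊕ ℕ) →₀ ℕ, e (Sum.inr N) ≠ 0 → coeff e (A i) = 0) ∧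
        weierstrassPoly (Sum.inr N) p + X (Sum.inr (N + 1)) * g =
          U * weierstrassPoly (Sum.inr N) A := by
  set σ : Equiv.Perm (ℕ ⊕ ℕ) := Equiv.swap (Sum.inr N) (Sum.inr (N + 1))
  have hFmem : rename σ (weierstrassPoly (Sum.inr N) p + X (Sum.inr (N + 1)) * g)
      ∈ ℬ.Bmn m (N + 2) :=
    ℬ.rename_swap_mem (by omega) (by omega)
      (add_mem (ℬ.mono le_rfl (by omega) (ℬ.weierstrassPoly_mem hp))
        (mul_mem (ℬ.X_inr_mem (by omega)) (ℬ.mono le_rfl (by omega) hg)))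
  have hFreg : SepRegRho I (N + 2) d
      (rename σ (weierstrassPoly (Sum.inr N) p + X (Sum.inr (N + 1)) * g)) := by
    rw [map_add, map_mul, rename_X, Equiv.swap_apply_right]
    exact hreg.rename_swap.add_X_mul (by omega) _
  obtain ⟨U, A, hU, ⟨V, hV, hUV⟩, hA, hF⟩ :=
    hWP.exists_isRhoPreparation (by omega) hFmem hFreg
  simp only [Nat.add_succ_sub_one] at hA hF
  refine ⟨rename σ U, ℬ.rename_swap_mem (by omega) (by omega) hU,
    ⟨rename σ V, ℬ.rename_swap_mem (by omega) (by omega) hV, by rw [← map_mul, hUV, map_one]⟩,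
    fun i => rename σ (A i),
    fun i => ℬ.rename_swap_mem (by omega) (by omega) (ℬ.mono le_rfl (by omega) (hA i)),
    fun i e he => ?_, ?_⟩
  · rw [coeff_rename_equiv]
    refine ℬ.coeff_eq_zero_of_mem (hA i) le_rfl ?_
    rwa [equivMapDomain_apply, Equiv.symm_symm, Equiv.swap_apply_right]
  · have h := congrArg (rename σ) hF
    rwa [rename_swap_rename_swap, map_mul, map_weierstrassPoly _ (rename_X _ _),
      Equiv.swap_apply_right] at h

theorem exists_eq_mul_add (hWP : SepHasWP ℬ) {m N d : ℕ}
    {p : Fin d → MvPowerSeries (ℕ ⊕ ℕ) B} (hp : ∀ i, p i ∈ ℬ.Bmn m N)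
    (hreg : SepRegRho I (N + 1) d (weierstrassPoly (Sum.inr N) p))
    {g : MvPowerSeries (ℕ ⊕ ℕ) B} (hg : g ∈ ℬ.Bmn m (N + 1)) :
    ∃ q ∈ ℬ.Bmn m (N + 1), ∃ r : Fin d → MvPowerSeries (ℕ ⊕ ℕ) B, (∀ i, r i ∈ ℬ.Bmn m N) ∧
      g = q * weierstrassPoly (Sum.inr N) p + sumMulXPow (Sum.inr N) r := by
  have ht : ¬ varOK m (N + 1) (Sum.inr (N + 1)) := by simp [varOK]
  have hsμ : ∀ v ∈ (single (Sum.inr (N + 1)) 1).support, ¬ varOK m (N + 1) v := fun v hv =>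
    (Finset.mem_singleton.mp (support_single_subset hv)) ▸ ht
  have hPmem := ℬ.weierstrassPoly_mem hp
  obtain ⟨U, hU, ⟨V, hV, hUV⟩, A, hA, hAρ, hF⟩ := hWP.exists_add_X_mul_eq_mul hp hreg hg
  obtain ⟨hP0, hg1⟩ := eq_of_add_X_mul_eq ht (by simp [varOK]) (ℬ.varsBelow _ _ _ hPmem)
    (ℬ.varsBelow _ _ _ hg) hF
  obtain ⟨hU1, hAp⟩ := hWP.isRhoPreparation_unique (by omega) hPmem hreg
    (r₁ := fun i => restrictVars m (N + 1) (A i))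
    ⟨ℬ.restrictVars_mem le_rfl (by omega) hU,
      ⟨_, ℬ.restrictVars_mem le_rfl (by omega) hV, by rw [← map_mul, hUV, map_one]⟩,
      fun i => ℬ.slice2_succ_mem le_rfl (by omega) (by simp) (hA i) (hAρ i), hP0⟩
    (⟨one_mem _, ⟨1, one_mem _, one_mul 1⟩, hp, (one_mul _).symm⟩ :
      IsRhoPreparation ℬ m (N + 1) _ 1 p)
  refine ⟨restrictVars m (N + 1) (pderiv B (Sum.inr (N + 1)) U), ?_,
    fun i => restrictVars m (N + 1) (pderiv B (Sum.inr (N + 1)) (A i)), fun i => ?_,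
    by rwa [hU1, hAp, one_mul] at hg1⟩
  · rw [← slice2_single_one ht]
    exact ℬ.slice_mem le_rfl (by omega) _ hsμ _ hU
  · beta_reduce
    rw [← slice2_single_one ht]
    exact ℬ.slice2_succ_mem le_rfl (by omega) hsμ (hA i) (hAρ i)

theorem eq_zero_of_mul_add_eq_zero (hWP : SepHasWP ℬ) {m N d : ℕ}
    {p : Fin d → MvPowerSeries (ℕ ⊕ ℕ) B} (hp : ∀ i, p i ∈ ℬ.Bmn m N)
    (hreg : SepRegRho I (N + 1) d (weierstrassPoly (Sum.inr N) p))
    {h : MvPowerSeries (ℕ ⊕ ℕ) B} (hh : h ∈ ℬ.Bmn m (N + 1))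
    {δ : Fin d → MvPowerSeries (ℕ ⊕ ℕ) B} (hδ : ∀ i, δ i ∈ ℬ.Bmn m N)
    (H : h * weierstrassPoly (Sum.inr N) p + sumMulXPow (Sum.inr N) δ = 0) :
    h = 0 ∧ δ = 0 := by
  set σ : Equiv.Perm (ℕ ⊕ ℕ) := Equiv.swap (Sum.inr N) (Sum.inr (N + 1))
  have hfix : ∀ {a}, a ∈ ℬ.Bmn m N → rename σ a = a :=
    ℬ.rename_swap_eq_self_of_mem le_rfl (by omega)
  have hσP : rename σ (weierstrassPoly (Sum.inr N) p) = weierstrassPoly (Sum.inr (N + 1)) p := by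
    rw [map_weierstrassPoly _ (rename_X _ _), Equiv.swap_apply_left]
    simp only [hfix (hp _)]
  set E := 1 - X (Sum.inr N) * rename σ h with hE
  have hEmem : E ∈ ℬ.Bmn m (N + 2) :=
    sub_mem (one_mem _) (mul_mem (ℬ.X_inr_mem (by omega))
      (ℬ.rename_swap_mem (by omega) (by omega) (ℬ.mono le_rfl (by omega) hh)))
  have hEreg : SepRegRho I (N + 2) 0 E := by
    rw [hE, sub_eq_add_neg, ← mul_neg]
    exact (sepRegRho_one _).add_X_mul (by omega) _
  obtain ⟨w, hw, hEw⟩ := hWP.exists_mul_eq_one (by omega) hEmem hEreg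
  have hN := one_sub_X_mul_mul_rename_swap (fun i => hfix (hp i)) (fun i => hfix (hδ i)) H
  have hNmem : E * rename σ (weierstrassPoly (Sum.inr N) p) ∈ ℬ.Bmn m (N + 2) :=
    mul_mem hEmem (ℬ.rename_swap_mem (j := N) (k := N + 1) (by omega) (by omega)
      (ℬ.mono le_rfl (by omega) (ℬ.weierstrassPoly_mem hp)))
  have hNreg : SepRegRho I (N + 2) d (E * rename σ (weierstrassPoly (Sum.inr N) p)) := by
    rw [hN, weierstrassPoly_add_mul, ← hσP]
    exact hreg.rename_swap.add_X_mul (by omega) _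
  obtain ⟨hE1, hpδ⟩ := hWP.isRhoPreparation_unique (by omega) hNmem hNreg
    (u₁ := E) (r₁ := p) (u₂ := 1) (r₂ := fun i => p i + X (Sum.inr N) * δ i)
    ⟨hEmem, ⟨w, hw, hEw⟩, fun i => ℬ.mono le_rfl (by omega) (hp i), by rw [hσP]; rfl⟩
    ⟨one_mem _, ⟨1, one_mem _, one_mul 1⟩,
      fun i => add_mem (ℬ.mono le_rfl (by omega) (hp i))
        (mul_mem (ℬ.X_inr_mem (by omega)) (ℬ.mono le_rfl (by omega) (hδ i))),
      by rw [hN, one_mul]; rfl⟩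
  constructor
  · have hσh := eq_zero_of_X_mul_eq_zero (sub_eq_self.mp hE1)
    rw [← rename_swap_rename_swap (Sum.inr N) (Sum.inr (N + 1)) h, hσh, map_zero]
  · funext i
    exact eq_zero_of_X_mul_eq_zero (add_eq_left.mp (congrFun hpδ i).symm)

end SepHasWP

end Preparation

end SCW

open SCW in
theorem stmt2_general {B : Type u} [CommRing B] (I : Ideal B)
    (ℬ : SepFamily B I) (hWP : SepHasWP ℬ) :
    ∀ m n d : ℕ, 1 ≤ n → ∀ f ∈ ℬ.Bmn m n, SepRegRho I n d f → ∀ g ∈ ℬ.Bmn m n,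
      ∃! qr : MvPowerSeries (ℕ ⊕ ℕ) B × (Fin d → MvPowerSeries (ℕ ⊕ ℕ) B),
        qr.1 ∈ ℬ.Bmn m n ∧ (∀ i, qr.2 i ∈ ℬ.Bmn m (n - 1)) ∧
        g = qr.1 * f + ∑ i : Fin d, qr.2 i * (MvPowerSeries.X (Sum.inr (n - 1))) ^ (i : ℕ) := by
  intro m n d hn f hf hreg g hg
  obtain ⟨N, rfl⟩ : ∃ N, n = N + 1 := ⟨n - 1, by omega⟩
  obtain ⟨u, p, hu, ⟨v, hv, huv⟩, hp, hfP⟩ := hWP.exists_isRhoPreparation hn hf hreg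
  simp only [Nat.add_sub_cancel] at hp hfP ⊢
  have hPreg := hreg.of_eq_mul (fun i e he => ℬ.coeff_eq_zero_of_mem (hp i) le_rfl he)
    (by rw [hfP, ← mul_assoc, mul_comm v, huv, one_mul])
  obtain ⟨q, hq, r, hr, hgq⟩ := hWP.exists_eq_mul_add hp hPreg hg
  refine ⟨(q * v, r), ⟨mul_mem hq hv, hr, ?_⟩, ?_⟩
  · change g = q * v * f + sumMulXPow (Sum.inr N) r
    rw [hgq, hfP]
    linear_combination (- q * weierstrassPoly (Sum.inr N) p) * huv
  rintro ⟨q', r'⟩ ⟨hq', hr', hgq'⟩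
  change g = q' * f + sumMulXPow (Sum.inr N) r' at hgq'
  obtain ⟨hq0, hr0⟩ := hWP.eq_zero_of_mul_add_eq_zero hp hPreg (δ := r' - r)
    (mul_mem (sub_mem hq' (mul_mem hq hv)) hu) (fun i => sub_mem (hr' i) (hr i)) (by
      rw [sumMulXPow_sub, hfP] at *
      linear_combination hgq - hgq' - q * weierstrassPoly (Sum.inr N) p * huv)
  refine Prod.ext ?_ (sub_eq_zero.mp hr0)
  linear_combination v * hq0 - (q' - q * v) * huv

open SCW in
/-- separated Weierstrass preparation implies Weierstrass division in `ρ_n`. -/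
theorem stmt2 {B : Type u} [CommRing B] (I : Ideal B) (hI : I ≠ ⊤)
    (ℬ : SepFamily B I) (hWP : SepHasWP ℬ) :
    ∀ m n d : ℕ, 1 ≤ n → ∀ f ∈ ℬ.Bmn m n, SepRegRho I n d f → ∀ g ∈ ℬ.Bmn m n,
      ∃! qr : MvPowerSeries (ℕ ⊕ ℕ) B × (Fin d → MvPowerSeries (ℕ ⊕ ℕ) B),
        qr.1 ∈ ℬ.Bmn m n ∧ (∀ i, qr.2 i ∈ ℬ.Bmn m (n - 1)) ∧
        g = qr.1 * f + ∑ i : Fin d, qr.2 i * (MvPowerSeries.X (Sum.inr (n - 1))) ^ (i : ℕ) :=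
  stmt2_general I ℬ hWP
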